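/- Fix an integer k ≥ 2. Let M_{A→B} be a quantum channel whose Choi state Φ^M_{RB} (with R ≅ A) is k-extendible with respect to the partition R:B. Then for every finite-dimensional reference system S and every state ρ_{SA}, the state (id_S ⊗ M)(ρ_{SA}) is k-extendible with respect to the partition S:B. -/

import Mathlib

open scoped Matrix Kronecker BigOperators ComplexOrder
open Matrix

attribute [local instance] Classical.propDecidable

noncomputable section

/-- A quantum state: a positive semidefinite complex matrix with unit trace. -/
def IsState {n : Type*} [Fintype n] (ρ : Matrix n n ℂ) : Prop :=
  ρ.PosSemidef ∧ ρ.trace = 1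

/-- The unitary permuting `k` copies of `B` according to a permutation `π ∈ S_k`. -/
def permMatrix (B : Type*) {k : ℕ} (π : Equiv.Perm (Fin k)) :
    Matrix (Fin k → B) (Fin k → B) ℂ :=
  Matrix.of fun f g => if f = g ∘ π then 1 else 0

/-- Partial trace over all `k` copies of `B` except the copy indexed by `i0`. -/
def marginalAt {A B : Type*} [Fintype B] {k : ℕ} (i0 : Fin k)
    (ω : Matrix (A × (Fin k → B)) (A × (Fin k → B)) ℂ) : Matrix (A × B) (A × B) ℂ :=
  Matrix.of fun p q =>
    ∑ f : Fin k → B, if f i0 = p.2 then ω (p.1, f) (q.1, Function.update f i0 q.2) else 0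

/-- `k`-extendibility of a bipartite state with respect to the partition `A : B`. -/
def IsKExtendible {A B : Type*} [Fintype A] [DecidableEq A] [Fintype B]
    {k : ℕ} (hk : 0 < k) (σ : Matrix (A × B) (A × B) ℂ) : Prop :=
  ∃ ω : Matrix (A × (Fin k → B)) (A × (Fin k → B)) ℂ,
    IsState ω ∧
    marginalAt ⟨0, hk⟩ ω = σ ∧
    ∀ π : Equiv.Perm (Fin k),
      ((1 : Matrix A A ℂ) ⊗ₖ permMatrix B π) * ω * ((1 : Matrix A A ℂ) ⊗ₖ permMatrix B π)ᴴ = ω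

/-- `k`-pure extendibility: the state is the marginal of a permutation-invariant pure state. -/
def IsKPureExtendible {A B : Type*} [Fintype A] [DecidableEq A] [Fintype B]
    {k : ℕ} (hk : 0 < k) (ρ : Matrix (A × B) (A × B) ℂ) : Prop :=
  ∃ ψ : (A × (Fin k → B)) → ℂ,
    (∑ x, Complex.normSq (ψ x)) = 1 ∧
    (∀ π : Equiv.Perm (Fin k),
      ((1 : Matrix A A ℂ) ⊗ₖ permMatrix B π) * Matrix.vecMulVec ψ (star ψ) *
        ((1 : Matrix A A ℂ) ⊗ₖ permMatrix B π)ᴴ = Matrix.vecMulVec ψ (star ψ)) ∧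
    marginalAt ⟨0, hk⟩ (Matrix.vecMulVec ψ (star ψ)) = ρ

/-- The maximally entangled state `(1/|T|) ∑_{i,j} |ii⟩⟨jj|` on `T ⊗ T`. -/
def maxEnt (T : Type*) [Fintype T] [DecidableEq T] : Matrix (T × T) (T × T) ℂ :=
  Matrix.of fun p q => if p.1 = p.2 ∧ q.1 = q.2 then ((Fintype.card T : ℂ))⁻¹ else 0

/-- Square root of a positive semidefinite matrix (junk value `0` off the PSD cone). -/
def psqrt {n : Type*} [Fintype n] [DecidableEq n] (A : Matrix n n ℂ) : Matrix n n ℂ :=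
  if h : A.PosSemidef then
    (h.1.eigenvectorUnitary : Matrix n n ℂ) *
      Matrix.diagonal (((↑) : ℝ → ℂ) ∘ Real.sqrt ∘ h.1.eigenvalues) *
      (star h.1.eigenvectorUnitary : Matrix n n ℂ)
  else 0

/-- Fidelity of states: `F(ρ,σ) = (Tr √(√σ ρ √σ))²`. -/
def fidelity {n : Type*} [Fintype n] [DecidableEq n] (ρ σ : Matrix n n ℂ) : ℝ :=
  ((psqrt (psqrt σ * ρ * psqrt σ)).trace).re ^ 2

/-- Partial trace over the second tensor factor. -/
def ptraceRight {α β : Type*} [Fintype β] (M : Matrix (α × β) (α × β) ℂ) :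
    Matrix α α ℂ :=
  Matrix.of fun a a' => ∑ b, M (a, b) (a', b)

/-- A twisting unitary `V = ∑_i I_A ⊗ |i⟩⟨i|_B ⊗ U^i_{A'B'}` (the shield system `S = A'B'`). -/
def IsTwistingUnitary {d : ℕ} {S : Type*} [Fintype S]
    (V : Matrix ((Fin d × Fin d) × S) ((Fin d × Fin d) × S) ℂ) : Prop :=
  ∃ U : Fin d → Matrix S S ℂ,
    (∀ i, (U i)ᴴ * U i = 1 ∧ U i * (U i)ᴴ = 1) ∧
    V = Matrix.of fun p q => if p.1 = q.1 then (U p.1.2) p.2 q.2 else 0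

/-- The privacy test `Π^γ = V (Φ^d ⊗ I) V†` associated with a twisting unitary `V`. -/
def privacyTest {d : ℕ} {S : Type*} [Fintype S] [DecidableEq S]
    (V : Matrix ((Fin d × Fin d) × S) ((Fin d × Fin d) × S) ℂ) :
    Matrix ((Fin d × Fin d) × S) ((Fin d × Fin d) × S) ℂ :=
  V * (maxEnt (Fin d) ⊗ₖ (1 : Matrix S S ℂ)) * Vᴴ

/-- A private state of `log₂ d` secret bits: `γ = V (Φ^d ⊗ τ) V†`. -/
def IsPrivateState {d : ℕ} {SA SB : Type*} [Fintype SA] [Fintype SB]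
    (γ : Matrix ((Fin d × Fin d) × (SA × SB)) ((Fin d × Fin d) × (SA × SB)) ℂ) : Prop :=
  ∃ (V : Matrix ((Fin d × Fin d) × (SA × SB)) ((Fin d × Fin d) × (SA × SB)) ℂ)
    (τ : Matrix (SA × SB) (SA × SB) ℂ),
    IsTwistingUnitary V ∧ IsState τ ∧ γ = V * (maxEnt (Fin d) ⊗ₖ τ) * Vᴴ

/-- The ε-hypothesis-testing relative entropy `D^ε_H(ρ‖σ)`. -/
def DH {n : Type*} [Fintype n] [DecidableEq n] (ε : ℝ) (ρ σ : Matrix n n ℂ) : ℝ :=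
  -Real.logb 2 (sInf { x : ℝ | ∃ Λ : Matrix n n ℂ, Λ.PosSemidef ∧
      ((1 : Matrix n n ℂ) - Λ).PosSemidef ∧
      1 - ε ≤ ((Λ * ρ).trace).re ∧ x = ((Λ * σ).trace).re })

/-- The `k`-unextendible hypothesis-testing divergence of a bipartite state. -/
def EHk {A B : Type*} [Fintype A] [DecidableEq A] [Fintype B] [DecidableEq B]
    {k : ℕ} (hk : 0 < k) (ε : ℝ) (ρ : Matrix (A × B) (A × B) ℂ) : ℝ :=
  sInf { x : ℝ | ∃ σ : Matrix (A × B) (A × B) ℂ, IsKExtendible hk σ ∧ x = DH ε ρ σ }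

/-- `id_R ⊗ Φ` applied entrywise via the blocks of `M`. -/
def tensorId {R n m : Type*} (Φ : Matrix n n ℂ → Matrix m m ℂ)
    (M : Matrix (R × n) (R × n) ℂ) : Matrix (R × m) (R × m) ℂ :=
  Matrix.of fun p q => Φ (Matrix.of fun i j => M (p.1, i) (q.1, j)) p.2 q.2

/-- `Φ ⊗ id_R` applied entrywise via the blocks of `M`. -/
def idTensor {R n m : Type*} (Φ : Matrix n n ℂ → Matrix m m ℂ)
    (M : Matrix (n × R) (n × R) ℂ) : Matrix (m × R) (m × R) ℂ :=
  Matrix.of fun p q => Φ (Matrix.of fun i j => M (i, p.2) (j, q.2)) p.1 q.1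

/-- Tensor product `E ⊗ F` of two maps on matrices. -/
def prodMap {A B A' B' : Type*} (E : Matrix A A ℂ → Matrix A' A' ℂ)
    (F : Matrix B B ℂ → Matrix B' B' ℂ)
    (M : Matrix (A × B) (A × B) ℂ) : Matrix (A' × B') (A' × B') ℂ :=
  idTensor E (tensorId F M)

/-- Linearity of a map on matrices. -/
def IsLinearMat {n m : Type*} (Φ : Matrix n n ℂ → Matrix m m ℂ) : Prop :=
  ∀ (c : ℂ) (M N : Matrix n n ℂ), Φ (c • M + N) = c • Φ M + Φ N

/-- Complete positivity of a linear map on matrices. -/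
def IsCPMap {n m : Type*} [Fintype n] [Fintype m] (Φ : Matrix n n ℂ → Matrix m m ℂ) : Prop :=
  IsLinearMat Φ ∧ ∀ (r : ℕ) (M : Matrix (Fin r × n) (Fin r × n) ℂ),
    M.PosSemidef → (tensorId Φ M).PosSemidef

/-- A quantum channel: a completely positive trace-preserving linear map. -/
def IsChannel {n m : Type*} [Fintype n] [Fintype m] (Φ : Matrix n n ℂ → Matrix m m ℂ) : Prop :=
  IsCPMap Φ ∧ ∀ M : Matrix n n ℂ, (Φ M).trace = M.trace

/-- A one-way LOCC channel `∑_x E^x ⊗ F^x` from `A ⊗ B` to `A' ⊗ B'`. -/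
def IsOneWayLOCC {A B A' B' : Type*} [Fintype A] [Fintype B] [Fintype A'] [Fintype B']
    (L : Matrix (A × B) (A × B) ℂ → Matrix (A' × B') (A' × B') ℂ) : Prop :=
  ∃ (m : ℕ) (E : Fin m → (Matrix A A ℂ → Matrix A' A' ℂ))
    (F : Fin m → (Matrix B B ℂ → Matrix B' B' ℂ)),
    (∀ x, IsCPMap (E x)) ∧
    (∀ M : Matrix A A ℂ, (∑ x, E x M).trace = M.trace) ∧
    (∀ x, IsChannel (F x)) ∧
    ∀ M, L M = ∑ x, prodMap (E x) (F x) M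

/-- The Choi state of a channel `N : A → B`. -/
def choiState {A B : Type*} [Fintype A] [DecidableEq A]
    (N : Matrix A A ℂ → Matrix B B ℂ) : Matrix (A × B) (A × B) ℂ :=
  tensorId N (maxEnt A)

/-- Hypothesis-testing divergence of channels: sup over reference systems and input states. -/
def chDivH {A B : Type*} [Fintype A] [Fintype B] [DecidableEq B] (ε : ℝ)
    (N M : Matrix A A ℂ → Matrix B B ℂ) : ℝ :=
  sSup { x : ℝ | ∃ (r : ℕ) (ρ : Matrix (Fin r × A) (Fin r × A) ℂ),
    IsState ρ ∧ x = DH ε (tensorId N ρ) (tensorId M ρ) }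

/-- The `k`-unextendible hypothesis-testing divergence of a channel. -/
def EHkCh {A B : Type*} [Fintype A] [DecidableEq A] [Fintype B] [DecidableEq B]
    {k : ℕ} (hk : 0 < k) (ε : ℝ) (N : Matrix A A ℂ → Matrix B B ℂ) : ℝ :=
  sInf { x : ℝ | ∃ M : Matrix A A ℂ → Matrix B B ℂ,
    IsChannel M ∧ IsKExtendible hk (choiState M) ∧ x = chDivH ε N M }

/-- Real power of a Hermitian matrix by functional calculus on its support
(zero eigenvalues are sent to zero; junk value `0` for non-Hermitian input). -/
def mpow {n : Type*} [Fintype n] [DecidableEq n] (A : Matrix n n ℂ) (r : ℝ) :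
    Matrix n n ℂ :=
  if hA : A.IsHermitian then
    (hA.eigenvectorUnitary : Matrix n n ℂ) *
      Matrix.diagonal (fun i =>
        if hA.eigenvalues i = 0 then (0 : ℂ) else ((hA.eigenvalues i ^ r : ℝ) : ℂ)) *
      (star hA.eigenvectorUnitary : Matrix n n ℂ)
  else 0

/-- The sandwiched Rényi relative entropy `D̃_α(ρ‖σ)`. -/
def sandwichedRenyi {n : Type*} [Fintype n] [DecidableEq n] (α : ℝ)
    (ρ σ : Matrix n n ℂ) : ℝ :=
  (α - 1)⁻¹ * Real.logb 2
    ((mpow (mpow σ ((1 - α) / (2 * α)) * ρ * mpow σ ((1 - α) / (2 * α))) α).trace).re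

/-- The `k`-unextendible sandwiched Rényi divergence of a bipartite state. -/
def sandEk {A B : Type*} [Fintype A] [DecidableEq A] [Fintype B] [DecidableEq B]
    {k : ℕ} (hk : 0 < k) (α : ℝ) (ρ : Matrix (A × B) (A × B) ℂ) : ℝ :=
  sInf { x : ℝ | ∃ σ : Matrix (A × B) (A × B) ℂ,
    IsKExtendible hk σ ∧ x = sandwichedRenyi α ρ σ }

/-- Sandwiched Rényi divergence of channels. -/
def sandDivCh {A B : Type*} [Fintype A] [Fintype B] [DecidableEq B] (α : ℝ)
    (N M : Matrix A A ℂ → Matrix B B ℂ) : ℝ :=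
  sSup { x : ℝ | ∃ (r : ℕ) (ρ : Matrix (Fin r × A) (Fin r × A) ℂ),
    IsState ρ ∧ x = sandwichedRenyi α (tensorId N ρ) (tensorId M ρ) }

/-- The `k`-unextendible sandwiched Rényi divergence of a channel. -/
def sandEkCh {A B : Type*} [Fintype A] [DecidableEq A] [Fintype B] [DecidableEq B]
    {k : ℕ} (hk : 0 < k) (α : ℝ) (N : Matrix A A ℂ → Matrix B B ℂ) : ℝ :=
  sInf { x : ℝ | ∃ M : Matrix A A ℂ → Matrix B B ℂ,
    IsChannel M ∧ IsKExtendible hk (choiState M) ∧ x = sandDivCh α N M }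

/-- The geometric Rényi relative entropy `D̂_α(ρ‖σ)` (`⊤` if `supp ρ ⊄ supp σ`). -/
def geomRenyi {n : Type*} [Fintype n] [DecidableEq n] (α : ℝ)
    (ρ σ : Matrix n n ℂ) : EReal :=
  if ∀ v : n → ℂ, σ.mulVec v = 0 → ρ.mulVec v = 0 then
    (((α - 1)⁻¹ * Real.logb 2
      ((σ * mpow (mpow σ (-(1 / 2)) * ρ * mpow σ (-(1 / 2))) α).trace).re : ℝ) : EReal)
  else ⊤

/-- Geometric Rényi divergence of channels. -/
def geomDivCh {A B : Type*} [Fintype A] [Fintype B] [DecidableEq B] (α : ℝ)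
    (N M : Matrix A A ℂ → Matrix B B ℂ) : EReal :=
  sSup { x : EReal | ∃ (r : ℕ) (ρ : Matrix (Fin r × A) (Fin r × A) ℂ),
    IsState ρ ∧ x = geomRenyi α (tensorId N ρ) (tensorId M ρ) }

/-- The `k`-unextendible geometric Rényi divergence of a channel. -/
def geomEkCh {A B : Type*} [Fintype A] [DecidableEq A] [Fintype B] [DecidableEq B]
    {k : ℕ} (hk : 0 < k) (α : ℝ) (N : Matrix A A ℂ → Matrix B B ℂ) : EReal :=
  sInf { x : EReal | ∃ M : Matrix A A ℂ → Matrix B B ℂ,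
    IsChannel M ∧ IsKExtendible hk (choiState M) ∧ x = geomDivCh α N M }

/-- The `n`-fold tensor power `ρ^{⊗n}` of a bipartite state, with the partition `A^n : B^n`. -/
def statePow {A B : Type*} (ρ : Matrix (A × B) (A × B) ℂ) (n : ℕ) :
    Matrix ((Fin n → A) × (Fin n → B)) ((Fin n → A) × (Fin n → B)) ℂ :=
  Matrix.of fun p q => ∏ i, ρ (p.1 i, p.2 i) (q.1 i, q.2 i)

/-- The `n`-fold tensor power `N^{⊗n}` of a channel. -/
def chTensorPow {A B : Type*} [Fintype A] [DecidableEq A]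
    (N : Matrix A A ℂ → Matrix B B ℂ) (n : ℕ)
    (M : Matrix (Fin n → A) (Fin n → A) ℂ) : Matrix (Fin n → B) (Fin n → B) ℂ :=
  Matrix.of fun f g => ∑ p : Fin n → A, ∑ q : Fin n → A,
    M p q * ∏ i, N (Matrix.single (p i) (q i) 1) (f i) (g i)

/-- The `d`-dimensional erasure channel with erasure probability `p`. -/
def erasureCh (d : ℕ) (p : ℝ) (ρ : Matrix (Fin d) (Fin d) ℂ) :
    Matrix (Fin (d + 1)) (Fin (d + 1)) ℂ :=
  Matrix.of fun i j =>
    if hi : (i : ℕ) < d then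
      (if hj : (j : ℕ) < d then ((1 - p : ℝ) : ℂ) * ρ ⟨i, hi⟩ ⟨j, hj⟩ else 0)
    else (if (j : ℕ) < d then 0 else (p : ℂ) * ρ.trace)

/-- `n`-fold product of the Bernoulli distribution `(x, y)` (`false ↦ x`, `true ↦ y`). -/
def bernProd (x y : ℝ) (n : ℕ) : (Fin n → Bool) → ℝ :=
  fun f => ∏ i, if f i then y else x

/-- The classical ε-hypothesis-testing relative entropy. -/
def DHclassical {X : Type*} [Fintype X] (ε : ℝ) (P Q : X → ℝ) : ℝ :=
  -Real.logb 2 (sInf { x : ℝ | ∃ t : X → ℝ,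
    (∀ i, 0 ≤ t i ∧ t i ≤ 1) ∧ 1 - ε ≤ ∑ i, t i * P i ∧ x = ∑ i, t i * Q i })

/-- Reordering `(X × K) × B ≃ K × (B × X)` used in forward-assisted protocols. -/
def protoReorder (X K B : Type*) : ((X × K) × B) ≃ (K × (B × X)) where
  toFun p := (p.1.2, (p.2, p.1.1))
  invFun q := ((q.2.2, q.1), q.2.1)
  left_inv _ := rfl
  right_inv _ := rfl

/-- The output of a one-shot forward-assisted secret-key protocol: the cq input state
`∑_x p_x |x⟩⟨x|_X ⊗ ρ^x_{A'A''A}` is sent through `id ⊗ N` and decoded by `D_{BX→B'B''}`. -/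
def protocolOutput {A B : Type*} {m d : ℕ} {SA SB : Type*}
    (N : Matrix A A ℂ → Matrix B B ℂ)
    (pr : Fin m → ℝ)
    (ρx : Fin m → Matrix ((Fin d × SA) × A) ((Fin d × SA) × A) ℂ)
    (D : Matrix (B × Fin m) (B × Fin m) ℂ → Matrix (Fin d × SB) (Fin d × SB) ℂ) :
    Matrix ((Fin d × SA) × (Fin d × SB)) ((Fin d × SA) × (Fin d × SB)) ℂ :=
  tensorId D (Matrix.reindex (protoReorder (Fin m) (Fin d × SA) B)
    (protoReorder (Fin m) (Fin d × SA) B)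
    (tensorId N (Matrix.of fun (p q : (Fin m × (Fin d × SA)) × A) =>
      if p.1.1 = q.1.1 then (pr p.1.1 : ℂ) * ρx p.1.1 (p.1.2, p.2) (q.1.2, q.2) else 0)))

/-- The Choi state of the `d`-dimensional erasure channel with erasure probability `1 - 1/k`:
`(1/k) Φ^d + (1 - 1/k)(I/d) ⊗ |e⟩⟨e|`. -/
def erasureChoi (d k : ℕ) : Matrix (Fin d × Fin (d + 1)) (Fin d × Fin (d + 1)) ℂ :=
  Matrix.of fun p q =>
    (k : ℂ)⁻¹ * ((d : ℂ)⁻¹ *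
      (if p.2 = Fin.castSucc p.1 ∧ q.2 = Fin.castSucc q.1 then 1 else 0)) +
    (1 - (k : ℂ)⁻¹) * ((d : ℂ)⁻¹ *
      (if p.1 = q.1 ∧ p.2 = Fin.last d ∧ q.2 = Fin.last d then 1 else 0))

/-- The explicit `k`-extension `(1/k) ∑_i Φ^d_{AB_i} ⊗ (⊗_{j≠i} |e⟩⟨e|_{B_j})`. -/
def erasureExt (d k : ℕ) :
    Matrix (Fin d × (Fin k → Fin (d + 1))) (Fin d × (Fin k → Fin (d + 1))) ℂ :=
  Matrix.of fun p q => (k : ℂ)⁻¹ * ∑ i : Fin k,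
    ((if p.2 i = Fin.castSucc p.1 ∧ q.2 i = Fin.castSucc q.1 then (d : ℂ)⁻¹ else 0) *
      ∏ j ∈ Finset.univ.erase i,
        (if p.2 j = Fin.last d ∧ q.2 j = Fin.last d then 1 else 0))

end

/-! The output `(id_S ⊗ M)(ρ)` is `|A|` times the link product of `ρ` with the Choi state of `M`.
Linking `ρ` instead with a symmetric `k`-extension `ω` of the Choi state gives a positive operator
that is still invariant under permutations of `B₁ ⋯ B_k` and whose `S B₁` marginal is the output,
hence a `k`-extension of it; its trace is that of its marginal, the trace of the output. -/

section LinkProduct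

variable {S A X : Type*} [Fintype A]

/-- The link product `Tr_A[(ρ^{T_A} ⊗ 1_X)(1_S ⊗ ω)]` of `ρ` on `S ⊗ A` and `ω` on `A ⊗ X`. -/
def linkProduct (ρ : Matrix (S × A) (S × A) ℂ) (ω : Matrix (A × X) (A × X) ℂ) :
    Matrix (S × X) (S × X) ℂ :=
  of fun p q => ∑ a, ∑ a', ρ (p.1, a) (q.1, a') * ω (a, p.2) (a', q.2)

theorem posSemidef_linkProduct [Fintype S] [Fintype X]
    {ρ : Matrix (S × A) (S × A) ℂ} {ω : Matrix (A × X) (A × X) ℂ}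
    (hρ : ρ.PosSemidef) (hω : ω.PosSemidef) : (linkProduct ρ ω).PosSemidef := by
  let V : Matrix ((S × A) × (A × X)) (S × X) ℂ :=
    of fun x p => if x.1.1 = p.1 ∧ x.1.2 = x.2.1 ∧ x.2.2 = p.2 then 1 else 0
  have hV : linkProduct ρ ω = Vᴴ * (ρ ⊗ₖ ω) * V := by
    ext p q
    simp only [linkProduct, of_apply, ite_and, mul_apply, conjTranspose_apply,
      RCLike.star_def, apply_ite (starRingEnd ℂ), map_one, map_zero, kroneckerMap_apply, ite_mul,
      one_mul, zero_mul, Fintype.sum_prod_type, Finset.sum_ite_irrel, Finset.sum_ite_eq',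
      Finset.mem_univ, ↓reduceIte, Finset.sum_const_zero, Finset.sum_ite_eq, mul_ite, mul_one,
      mul_zero, V]
    exact Finset.sum_comm
  rw [hV]
  exact (hρ.kronecker hω).conjTranspose_mul_mul_same V

theorem marginalAt_linkProduct {B : Type*} [Fintype B] {k : ℕ} (i : Fin k)
    (ρ : Matrix (S × A) (S × A) ℂ) (ω : Matrix (A × (Fin k → B)) (A × (Fin k → B)) ℂ) :
    marginalAt i (linkProduct ρ ω) = linkProduct ρ (marginalAt i ω) := by
  ext p q
  simp only [marginalAt, linkProduct, of_apply, Finset.mul_sum, ← Finset.sum_filter]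
  rw [Finset.sum_comm]
  exact Finset.sum_congr rfl fun a _ => Finset.sum_comm

theorem kronecker_permMatrix_conj_apply [Fintype S] [DecidableEq S] {B : Type*} [Fintype B]
    {k : ℕ} (π : Equiv.Perm (Fin k)) (ω : Matrix (S × (Fin k → B)) (S × (Fin k → B)) ℂ)
    (s s' : S) (f g : Fin k → B) :
    (((1 : Matrix S S ℂ) ⊗ₖ permMatrix B π) * ω * ((1 : Matrix S S ℂ) ⊗ₖ permMatrix B π)ᴴ)
      (s, f) (s', g) = ω (s, f ∘ π.symm) (s', g ∘ π.symm) := by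
  have hcond : ∀ h t : Fin k → B, h = t ∘ π ↔ t = h ∘ π.symm := fun h t =>
    ⟨fun e => by simp [e, Function.comp_assoc], fun e => by simp [e, Function.comp_assoc]⟩
  simp only [mul_apply, conjTranspose_apply, kroneckerMap_apply, permMatrix, of_apply, one_apply, Fintype.sum_prod_type, hcond,
    apply_ite (star : ℂ → ℂ), star_one, star_zero, ite_mul, mul_ite, one_mul, mul_one,
    zero_mul, mul_zero, Finset.sum_ite_eq, Finset.sum_ite_eq', Finset.mem_univ, if_true]

theorem linkProduct_conj_permMatrix [Fintype S] [DecidableEq S] [DecidableEq A] {B : Type*}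
    [Fintype B] {k : ℕ}
    (π : Equiv.Perm (Fin k)) (ρ : Matrix (S × A) (S × A) ℂ)
    (ω : Matrix (A × (Fin k → B)) (A × (Fin k → B)) ℂ) :
    ((1 : Matrix S S ℂ) ⊗ₖ permMatrix B π) * linkProduct ρ ω *
        ((1 : Matrix S S ℂ) ⊗ₖ permMatrix B π)ᴴ =
      linkProduct ρ (((1 : Matrix A A ℂ) ⊗ₖ permMatrix B π) * ω *
        ((1 : Matrix A A ℂ) ⊗ₖ permMatrix B π)ᴴ) := by
  ext ⟨s, f⟩ ⟨s', g⟩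
  simp only [kronecker_permMatrix_conj_apply, linkProduct, of_apply]

theorem trace_marginalAt [Fintype S] {B : Type*} [Fintype B] {k : ℕ} (i : Fin k)
    (ω : Matrix (S × (Fin k → B)) (S × (Fin k → B)) ℂ) :
    (marginalAt i ω).trace = ω.trace := by
  simp only [trace, marginalAt, diag_apply, of_apply, Fintype.sum_prod_type]
  refine Finset.sum_congr rfl fun s _ => ?_
  rw [Finset.sum_comm]
  simp [Finset.sum_ite_eq]

theorem IsKExtendible.linkProduct_left [Fintype S] [DecidableEq S] [DecidableEq A] {B : Type*}
    [Fintype B] {k : ℕ} {hk : 0 < k} {σ : Matrix (A × B) (A × B) ℂ} (hσ : IsKExtendible hk σ)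
    {ρ : Matrix (S × A) (S × A) ℂ} (hρ : ρ.PosSemidef) (htr : (linkProduct ρ σ).trace = 1) :
    IsKExtendible hk (linkProduct ρ σ) := by
  obtain ⟨ω, ⟨hωpos, -⟩, hωσ, hωπ⟩ := hσ
  have hmarg : marginalAt ⟨0, hk⟩ (linkProduct ρ ω) = linkProduct ρ σ := by
    rw [marginalAt_linkProduct, hωσ]
  refine ⟨linkProduct ρ ω, ⟨posSemidef_linkProduct hρ hωpos, ?_⟩, hmarg, fun π => ?_⟩
  · rw [← trace_marginalAt ⟨0, hk⟩, hmarg, htr]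
  · rw [linkProduct_conj_permMatrix, hωπ]

end LinkProduct

section Channel

variable {n m : Type*}

theorem IsLinearMat.map_zero {Φ : Matrix n n ℂ → Matrix m m ℂ} (hΦ : IsLinearMat Φ) :
    Φ 0 = 0 := by
  simpa using hΦ 1 0 0

theorem IsLinearMat.map_smul {Φ : Matrix n n ℂ → Matrix m m ℂ} (hΦ : IsLinearMat Φ) (c : ℂ)
    (X : Matrix n n ℂ) : Φ (c • X) = c • Φ X := by
  simpa [hΦ.map_zero] using hΦ c X 0

def IsLinearMat.toLinearMap {Φ : Matrix n n ℂ → Matrix m m ℂ} (hΦ : IsLinearMat Φ) :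
    Matrix n n ℂ →ₗ[ℂ] Matrix m m ℂ where
  toFun := Φ
  map_add' X Y := by simpa using hΦ 1 X Y
  map_smul' := hΦ.map_smul

theorem IsLinearMat.apply_eq_sum_single [Fintype n] [DecidableEq n]
    {Φ : Matrix n n ℂ → Matrix m m ℂ} (hΦ : IsLinearMat Φ) (X : Matrix n n ℂ) :
    Φ X = ∑ a, ∑ a', X a a' • Φ (single a a' 1) := by
  have hX : X = ∑ a, ∑ a', X a a' • single a a' (1 : ℂ) := by
    simpa [smul_single] using matrix_eq_sum_single X
  change hΦ.toLinearMap X = _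
  conv_lhs => rw [hX]
  simp only [map_sum, _root_.map_smul]
  rfl

variable {S A B : Type*} [Fintype A]

theorem trace_tensorId [Fintype S] [Fintype B] {M : Matrix A A ℂ → Matrix B B ℂ}
    (hM : ∀ X, (M X).trace = X.trace) (ρ : Matrix (S × A) (S × A) ℂ) :
    (tensorId M ρ).trace = ρ.trace := by
  simp only [trace, tensorId, diag_apply, of_apply, Fintype.sum_prod_type]
  exact Finset.sum_congr rfl fun s _ => hM _

variable [DecidableEq A]

theorem choiState_apply {M : Matrix A A ℂ → Matrix B B ℂ} (hM : IsLinearMat M)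
    (a a' : A) (b b' : B) :
    choiState M (a, b) (a', b') = (Fintype.card A : ℂ)⁻¹ * M (single a a' 1) b b' := by
  have hblock : (of fun i j => maxEnt A (a, i) (a', j)) =
      (Fintype.card A : ℂ)⁻¹ • single a a' 1 := by
    ext i j
    simp [maxEnt, single, mul_ite]
  simp only [choiState, tensorId, of_apply, hblock, hM.map_smul, Matrix.smul_apply, smul_eq_mul]

theorem tensorId_eq_linkProduct_choiState {M : Matrix A A ℂ → Matrix B B ℂ}
    (hM : IsLinearMat M) (ρ : Matrix (S × A) (S × A) ℂ) :
    tensorId M ρ = linkProduct ((Fintype.card A : ℂ) • ρ) (choiState M) := by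
  ext ⟨s, b⟩ ⟨s', b'⟩
  simp only [tensorId, linkProduct, of_apply, choiState_apply hM, Matrix.smul_apply]
  rw [hM.apply_eq_sum_single]
  simp only [Matrix.sum_apply, Matrix.smul_apply, smul_eq_mul]
  refine Finset.sum_congr rfl fun a _ => Finset.sum_congr rfl fun a' _ => ?_
  have hcard : (Fintype.card A : ℂ) ≠ 0 := Nat.cast_ne_zero.mpr (Fintype.card_pos_iff.mpr ⟨a⟩).ne'
  rw [of_apply]
  field_simp

end Channel

/-- If the Choi state of a channel is `k`-extendible, then every output of the
channel (acting on one share of any bipartite state) is `k`-extendible. -/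
theorem kExtendible_output_of_kExtendible_choi
    {A B : Type*} [Fintype A] [DecidableEq A] [Fintype B]
    {k : ℕ} (hk : 2 ≤ k)
    (M : Matrix A A ℂ → Matrix B B ℂ) (hM : IsChannel M)
    (hChoi : IsKExtendible (show 0 < k by omega) (choiState M)) :
    ∀ (S : Type) [Fintype S] [DecidableEq S],
    ∀ ρ : Matrix (S × A) (S × A) ℂ, IsState ρ →
      IsKExtendible (show 0 < k by omega) (tensorId M ρ) := by
  intro S _ _ ρ hρ
  have hlink := tensorId_eq_linkProduct_choiState hM.1.1 ρ
  rw [hlink]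
  refine hChoi.linkProduct_left (hρ.1.smul (Nat.cast_nonneg _)) ?_
  rw [← hlink, trace_tensorId hM.2, hρ.2]
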